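/- Let (L, ν) be a finite measure space, let Ψ : (0,∞) → (0,∞) be convex with lim_{r→0⁺} Ψ(r) = 0, and let r₀ > 0. Let R ⊂ (0,∞) × L be a measurable set such that for ν-almost every l ∈ L the slice R_l = {r : (r,l) ∈ R} is a finite union of bounded intervals, and such that (λ ⊗ ν)(R) = r₀ · ν(L), where λ is Lebesgue measure on (0,∞). For each l let E(l) ⊂ (0,∞) be the set of topological boundary points of R_l in (0,∞), and assume l ↦ Σ_{r ∈ E(l)} Ψ(r) is measurable. Then ∫_L (Σ_{r ∈ E(l)} Ψ(r)) dν(l) ≥ Ψ(r₀) · ν(L). -/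

import Mathlib

/-!
Let `c` be the right derivative of `Ψ` at `r₀`, so that `φ x = Ψ r₀ + c (x - r₀)` is a supporting
line of `Ψ`. Letting `x → 0⁺` gives `φ 0 ≤ 0`, hence `c ≥ Ψ r₀ / r₀ > 0` and so `φ` is increasing.
On a fiber whose slice `S` has length `m`, the point `sSup S ≥ m` is a boundary point, so the
fiber contributes at least `Ψ (sSup S) ≥ φ (sSup S) ≥ φ m` (or `0 ≥ φ 0` when `S = ∅`). Since `φ`
is affine and the lengths `m` average to `r₀`, integrating gives `Ψ r₀ · ν L`.
-/

open MeasureTheory Filter Set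

lemma ConvexOn.add_rightDeriv_mul_sub_le {S : Set ℝ} {f : ℝ → ℝ} {x y : ℝ}
    (hf : ConvexOn ℝ S f) (hx : x ∈ interior S) (hy : y ∈ S) :
    f x + derivWithin f (Ioi x) x * (y - x) ≤ f y := by
  rcases lt_trichotomy y x with hyx | rfl | hxy
  · have h := (hf.slope_le_leftDeriv_of_mem_interior hy hx hyx).trans
      (hf.leftDeriv_le_rightDeriv_of_mem_interior hx)
    rw [slope_def_field, div_le_iff₀ (sub_pos.2 hyx)] at h
    linarith
  · simp
  · have h := hf.rightDeriv_le_slope_of_mem_interior hx hy hxy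
    rw [slope_def_field, le_div_iff₀ (sub_pos.2 hxy)] at h
    linarith

section Frontier

variable {α : Type*} [ConditionallyCompleteLinearOrder α] [TopologicalSpace α] [OrderTopology α]

lemma Set.OrdConnected.frontier_subset_csInf_csSup {s : Set α} (hs : s.OrdConnected)
    (hb : BddBelow s) (ha : BddAbove s) : frontier s ⊆ {sInf s, sSup s} := by
  rcases s.eq_empty_or_nonempty with rfl | hne
  · simp
  rw [← Icc_sdiff_Ioo_same (csInf_le_csSup hne hb ha)]
  refine sdiff_subset_sdiff (closure_minimal (subset_Icc_csInf_csSup hb ha) isClosed_Icc)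
    (interior_maximal (fun y hy => ?_) isOpen_Ioo)
  obtain ⟨a, has, hay⟩ := exists_lt_of_csInf_lt hne hy.1
  obtain ⟨b, hbs, hyb⟩ := exists_lt_of_lt_csSup hne hy.2
  exact hs.out has hbs ⟨hay.le, hyb.le⟩

lemma frontier_iUnion_subset_of_finite {X ι : Type*} [TopologicalSpace X] [Finite ι]
    (s : ι → Set X) : frontier (⋃ i, s i) ⊆ ⋃ i, frontier (s i) := by
  intro x hx
  obtain ⟨i, hi⟩ := mem_iUnion.1 (closure_iUnion_of_finite s ▸ hx.1)
  exact mem_iUnion.2 ⟨i, hi, fun h => hx.2 (interior_mono (subset_iUnion s i) h)⟩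

lemma finite_frontier_iUnion_ordConnected {ι : Type*} [Finite ι] {s : ι → Set α}
    (hs : ∀ i, (s i).OrdConnected) (hb : ∀ i, BddBelow (s i)) (ha : ∀ i, BddAbove (s i)) :
    (frontier (⋃ i, s i)).Finite :=
  ((finite_iUnion fun _ => (finite_singleton _).insert _).subset
    (iUnion_mono fun i => (hs i).frontier_subset_csInf_csSup (hb i) (ha i))).subset
    (frontier_iUnion_subset_of_finite s)

lemma csSup_mem_frontier [DenselyOrdered α] [NoMaxOrder α] {s : Set α} (hne : s.Nonempty)
    (hs : BddAbove s) : sSup s ∈ frontier s := by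
  refine ⟨csSup_mem_closure hne hs, fun h => ?_⟩
  have hnear : ∀ᶠ x in nhdsWithin (sSup s) (Ioi (sSup s)), x ∈ s :=
    mem_nhdsWithin_of_mem_nhds (mem_interior_iff_mem_nhds.1 h)
  obtain ⟨x, hxs, hx⟩ := (hnear.and self_mem_nhdsWithin).exists
  exact (le_csSup hs hxs).not_gt hx

end Frontier

lemma apply_volume_toReal_le_finsum_frontier {φ Ψ : ℝ → ℝ} (hφ : Monotone φ) (hφ0 : φ 0 ≤ 0)
    (hφΨ : ∀ x > 0, φ x ≤ Ψ x) (hΨ : ∀ x > 0, 0 ≤ Ψ x) {S : Set ℝ} (hS : S ⊆ Ioi 0)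
    (hSb : BddAbove S) (hfin : (frontier S).Finite) :
    φ (volume S).toReal ≤ ∑ᶠ r ∈ frontier S ∩ Ioi 0, Ψ r := by
  rcases S.eq_empty_or_nonempty with rfl | hne
  · simpa using hφ0
  set b := sSup S
  have hb : 0 < b := let ⟨x, hx⟩ := hne; (hS hx).trans_le (le_csSup hSb hx)
  have hvol : (volume S).toReal ≤ b := by
    refine ENNReal.toReal_le_of_le_ofReal hb.le ?_
    calc volume S ≤ volume (Ioc 0 b) := measure_mono fun x hx => ⟨hS hx, le_csSup hSb hx⟩
      _ = ENNReal.ofReal b := by rw [Real.volume_Ioc, sub_zero]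
  have hEfin : (frontier S ∩ Ioi 0).Finite := hfin.subset inter_subset_left
  calc φ (volume S).toReal ≤ φ b := hφ hvol
    _ ≤ Ψ b := hφΨ b hb
    _ ≤ ∑ᶠ r ∈ frontier S ∩ Ioi 0, Ψ r := by
      rw [finsum_mem_eq_finite_toFinset_sum _ hEfin]
      refine Finset.single_le_sum (fun r hr => hΨ r (hEfin.mem_toFinset.1 hr).2)
        (hEfin.mem_toFinset.2 ⟨csSup_mem_frontier hne hSb, hb⟩)

lemma ofReal_mul_measure_univ_le_lintegral_of_affine_le {L : Type*} [MeasurableSpace L]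
    {ν : Measure L} [IsFiniteMeasure ν] {m : L → ENNReal} {f : L → ℝ} {a c r : ℝ}
    (ha : 0 ≤ a) (hc : 0 ≤ c) (hmean : ∫⁻ l, m l ∂ν = ENNReal.ofReal r * ν univ)
    (hf : ∀ᵐ l ∂ν, m l ≠ ⊤ ∧ a + c * ((m l).toReal - r) ≤ f l) :
    ENNReal.ofReal a * ν univ ≤ ∫⁻ l, ENNReal.ofReal (f l) ∂ν := by
  -- The bound is moved to `a + c m ≤ f + c r` since there is no subtraction in `ℝ≥0∞`.
  have hpointwise : ∀ᵐ l ∂ν, ENNReal.ofReal a + ENNReal.ofReal c * m l ≤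
      ENNReal.ofReal (f l) + ENNReal.ofReal c * ENNReal.ofReal r := by
    filter_upwards [hf] with l ⟨hm, hl⟩
    calc ENNReal.ofReal a + ENNReal.ofReal c * m l
        = ENNReal.ofReal (a + c * (m l).toReal) := by
          rw [ENNReal.ofReal_add ha (by positivity), ENNReal.ofReal_mul hc,
            ENNReal.ofReal_toReal hm]
      _ ≤ ENNReal.ofReal (f l + c * r) := ENNReal.ofReal_le_ofReal (by linarith)
      _ ≤ ENNReal.ofReal (f l) + ENNReal.ofReal c * ENNReal.ofReal r := by
          rw [← ENNReal.ofReal_mul hc]; exact ENNReal.ofReal_add_le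
  have hint := lintegral_mono_ae hpointwise
  rw [lintegral_add_left measurable_const, lintegral_const, lintegral_const_mul' _ _
    ENNReal.ofReal_ne_top, hmean, lintegral_add_right _ measurable_const, lintegral_const,
    ← mul_assoc] at hint
  exact (ENNReal.add_le_add_iff_right
    (ENNReal.mul_ne_top (ENNReal.mul_ne_top (by simp) (by simp)) (measure_ne_top ν _))).1 hint

theorem stmt_4_general {L : Type*} [MeasurableSpace L] (ν : Measure L) [IsFiniteMeasure ν]
    (Ψ : ℝ → ℝ) (hΨconv : ConvexOn ℝ (Set.Ioi 0) Ψ) (hΨpos : ∀ r > (0:ℝ), 0 < Ψ r)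
    (hΨ0 : Tendsto Ψ (nhdsWithin 0 (Set.Ioi 0)) (nhds 0))
    (r₀ : ℝ) (hr₀ : 0 < r₀)
    (R : Set (ℝ × L)) (hRmeas : MeasurableSet R)
    (hRsub : R ⊆ Set.Ioi (0:ℝ) ×ˢ Set.univ)
    (hslices : ∀ᵐ l ∂ν, ∃ (m : ℕ) (J : Fin m → Set ℝ),
      (∀ i, (J i).OrdConnected ∧ Bornology.IsBounded (J i)) ∧
      {r : ℝ | (r, l) ∈ R} = ⋃ i, J i)
    (hvol : (volume.prod ν) R = ENNReal.ofReal r₀ * ν Set.univ)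
    (E : L → Set ℝ) (hE : ∀ l, E l = frontier {r : ℝ | (r, l) ∈ R} ∩ Set.Ioi 0) :
    ENNReal.ofReal (Ψ r₀) * ν Set.univ ≤
      ∫⁻ l, ENNReal.ofReal (∑ᶠ r ∈ E l, Ψ r) ∂ν := by
  set c := derivWithin Ψ (Ioi r₀) r₀
  have hsupp : ∀ x > 0, Ψ r₀ + c * (x - r₀) ≤ Ψ x := fun x hx =>
    hΨconv.add_rightDeriv_mul_sub_le (by rwa [interior_Ioi]) hx
  have hsupp0 : Ψ r₀ + c * (0 - r₀) ≤ 0 :=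
    le_of_tendsto_of_tendsto ((by fun_prop : Continuous fun x => Ψ r₀ + c * (x - r₀)).tendsto 0
      |>.mono_left nhdsWithin_le_nhds) hΨ0 (eventually_nhdsWithin_of_forall hsupp)
  have hc : 0 ≤ c := by nlinarith [hΨpos r₀ hr₀]
  refine ofReal_mul_measure_univ_le_lintegral_of_affine_le (hΨpos r₀ hr₀).le hc
    (by rw [← hvol, Measure.prod_apply_symm hRmeas]) ?_
  filter_upwards [hslices] with l ⟨m, J, hJ, hS⟩
  have hbdd : Bornology.IsBounded {r : ℝ | (r, l) ∈ R} :=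
    hS ▸ Bornology.isBounded_iUnion.2 fun i => (hJ i).2
  have hfin : (frontier {r : ℝ | (r, l) ∈ R}).Finite :=
    hS ▸ finite_frontier_iUnion_ordConnected (fun i => (hJ i).1) (fun i => (hJ i).2.bddBelow)
      fun i => (hJ i).2.bddAbove
  exact ⟨hbdd.measure_lt_top.ne, hE l ▸ apply_volume_toReal_le_finsum_frontier
    (fun x y hxy => by gcongr) hsupp0 hsupp (fun r hr => (hΨpos r hr).le)
    (fun r hr => (hRsub hr).1) hbdd.bddAbove hfin⟩

/-- Slice formulation of the lemma that in `(0,∞) × L` with volume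
density `1` and convex surface density `Ψ` vanishing at `0⁺`, vertical fibers minimize
vertical surface area among regions of the same volume: if `R ⊆ (0,∞) × L` has
a.e. slices that are finite unions of bounded intervals and has volume `r₀ · ν L`, then
the fiberwise sum of `Ψ` over the slice boundary points `E l` integrates to at least
`Ψ r₀ · ν L`. -/
theorem stmt_4 {L : Type*} [MeasurableSpace L] (ν : Measure L) [IsFiniteMeasure ν]
    (Ψ : ℝ → ℝ) (hΨconv : ConvexOn ℝ (Set.Ioi 0) Ψ) (hΨpos : ∀ r > (0:ℝ), 0 < Ψ r)
    (hΨ0 : Tendsto Ψ (nhdsWithin 0 (Set.Ioi 0)) (nhds 0))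
    (r₀ : ℝ) (hr₀ : 0 < r₀)
    (R : Set (ℝ × L)) (hRmeas : MeasurableSet R)
    (hRsub : R ⊆ Set.Ioi (0:ℝ) ×ˢ Set.univ)
    (hslices : ∀ᵐ l ∂ν, ∃ (m : ℕ) (J : Fin m → Set ℝ),
      (∀ i, (J i).OrdConnected ∧ Bornology.IsBounded (J i)) ∧
      {r : ℝ | (r, l) ∈ R} = ⋃ i, J i)
    (hvol : (volume.prod ν) R = ENNReal.ofReal r₀ * ν Set.univ)
    (E : L → Set ℝ) (hE : ∀ l, E l = frontier {r : ℝ | (r, l) ∈ R} ∩ Set.Ioi 0)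
    (hmeas : Measurable fun l => ∑ᶠ r ∈ E l, Ψ r) :
    ENNReal.ofReal (Ψ r₀) * ν Set.univ ≤
      ∫⁻ l, ENNReal.ofReal (∑ᶠ r ∈ E l, Ψ r) ∂ν :=
  stmt_4_general ν Ψ hΨconv hΨpos hΨ0 r₀ hr₀ R hRmeas hRsub hslices hvol E hE
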